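/- Let R = r_0 r_1 … r_n be a path of even length n, let w be an even integer with |w| ≤ n, and let c_0, c_n ∈ {1,2,3} satisfy c_n ≡ c_0 + w (mod 3). Then there exists a proper 3-coloring φ of R with φ(r_0) = c_0, φ(r_n) = c_n, and δ_φ(R) = w. -/
import Mathlib


/-- `δ_φ(u,v)`: 1 if φ(v) − φ(u) ∈ {1,−2}, and −1 otherwise. -/
def deltaVal (a b : ℤ) : ℤ := if b - a = 1 ∨ b - a = -2 then 1 else -1

theorem stmt4 (n : ℕ) (hn : Even n) (w : ℤ) (hw : Even w) (hwn : |w| ≤ (n : ℤ))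
    (c0 cn : ℤ) (hc0 : c0 = 1 ∨ c0 = 2 ∨ c0 = 3) (hcn : cn = 1 ∨ cn = 2 ∨ cn = 3)
    (hmod : (3 : ℤ) ∣ (cn - (c0 + w))) :
    ∃ φ : ℕ → ℤ,
      φ 0 = c0 ∧ φ n = cn ∧
      (∀ i ≤ n, φ i = 1 ∨ φ i = 2 ∨ φ i = 3) ∧
      (∀ i < n, φ i ≠ φ (i + 1)) ∧
      (∑ i ∈ Finset.range n, deltaVal (φ i) (φ (i + 1))) = w := by
  obtain ⟨m, hm⟩ := hn
  obtain ⟨a, ha⟩ := hw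
  obtain ⟨d, hd⟩ := hmod
  rw [abs_le] at hwn
  set k : ℤ := ((n : ℤ) + w) / 2 with hkdef
  have hk2 : 2 * k = (n : ℤ) + w := by omega
  set g : ℕ → ℤ := fun i => if (i : ℤ) ≤ k then (i : ℤ) else 2 * k - i with hg
  set φ : ℕ → ℤ := fun i => (c0 - 1 + g i) % 3 + 1 with hφ
  have hg0 : g 0 = 0 := by simp [hg]; omega
  have hgn : g n = w := by simp only [hg]; split <;> omega
  have hstep : ∀ i, g (i + 1) = g i + 1 ∨ g (i + 1) = g i - 1 := by
    intro i
    simp only [hg]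
    push_cast
    split_ifs <;> omega
  have hdelta : ∀ i, deltaVal (φ i) (φ (i + 1)) = g (i + 1) - g i := by
    intro i
    rcases hstep i with h | h <;> simp only [hφ, deltaVal, h] <;> split_ifs with hc <;> omega
  refine ⟨φ, ?_, ?_, ?_, ?_, ?_⟩
  · simp only [hφ, hg0]; omega
  · simp only [hφ, hgn]; omega
  · intro i _; simp only [hφ]; omega
  · intro i _
    rcases hstep i with h | h <;> simp only [hφ, h] <;> omega
  · rw [Finset.sum_congr rfl (fun i _ => hdelta i), Finset.sum_range_sub, hgn, hg0, sub_zero]
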